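/- Let G be a finite loopless multigraph with m ≥ 1 edges. Then OPT(G) ≥ Σ_v -p♭_v log₂(deg(v)/m) for any biased orientation with in-degree distribution p♭; equivalently OPT(G) ≥ log₂ m − (1/m) Σ_{e=uv∈E} log₂ max{deg(u), deg(v)}. -/
import Mathlib


open Finset Real

structure Multigraph (V E : Type) where
  ends : E → V × V
  loopless : ∀ e, (ends e).1 ≠ (ends e).2

namespace Multigraph

variable {V E : Type} [Fintype V] [DecidableEq V] [Fintype E]

/-- The head of edge `e` under orientation `o`. -/
def head (G : Multigraph V E) (o : E → Bool) (e : E) : V :=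
  if o e then (G.ends e).1 else (G.ends e).2

/-- The tail of edge `e` under orientation `o`. -/
def tail (G : Multigraph V E) (o : E → Bool) (e : E) : V :=
  if o e then (G.ends e).2 else (G.ends e).1

/-- In-degree of `v` in the orientation `o`. -/
def inDeg (G : Multigraph V E) (o : E → Bool) (v : V) : ℕ :=
  (Finset.univ.filter (fun e => G.head o e = v)).card

/-- Degree of `v` in `G` (loopless, so no double counting). -/
def deg (G : Multigraph V E) (v : V) : ℕ :=
  (Finset.univ.filter (fun e => (G.ends e).1 = v ∨ (G.ends e).2 = v)).card

/-- Entropy (base 2) of the in-degree distribution of the orientation `o`. -/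
noncomputable def entropy (G : Multigraph V E) (o : E → Bool) : ℝ :=
  ∑ v, -((G.inDeg o v : ℝ) / (Fintype.card E : ℝ)) *
      Real.logb 2 ((G.inDeg o v : ℝ) / (Fintype.card E : ℝ))

/-- Minimum entropy over all orientations of `G`. -/
noncomputable def OPT (G : Multigraph V E) : ℝ := ⨅ o : E → Bool, G.entropy o

/-- An orientation is biased if every edge is oriented toward an endpoint of
maximum degree (every edge `vw` with `deg v > deg w` points toward `v`). -/
def Biased (G : Multigraph V E) (o : E → Bool) : Prop :=
  ∀ e, G.deg (G.tail o e) ≤ G.deg (G.head o e)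

/-- Number of edges with at least one endpoint in `S`. -/
def edgeCover (G : Multigraph V E) (S : Finset V) : ℕ :=
  (Finset.univ.filter (fun e => (G.ends e).1 ∈ S ∨ (G.ends e).2 ∈ S)).card

end Multigraph


section Aux

open Multigraph

variable {V E : Type} [Fintype V] [DecidableEq V] [Fintype E]

lemma head_mem_ends (G : Multigraph V E) (o : E → Bool) (e : E) :
    (G.ends e).1 = G.head o e ∨ (G.ends e).2 = G.head o e := by
  unfold Multigraph.head; cases o e <;> simp

lemma inDeg_le_deg (G : Multigraph V E) (o : E → Bool) (v : V) :
    G.inDeg o v ≤ G.deg v := by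
  apply Finset.card_le_card
  intro e he
  simp only [Finset.mem_filter, Finset.mem_univ, true_and] at he ⊢
  rcases head_mem_ends G o e with h | h
  · left; rw [h, he]
  · right; rw [h, he]

lemma sum_inDeg (G : Multigraph V E) (o : E → Bool) :
    ∑ v, G.inDeg o v = Fintype.card E := by
  rw [← Finset.card_univ]
  exact (Finset.card_eq_sum_card_fiberwise (fun e _ => Finset.mem_univ (G.head o e))).symm

lemma sum_fiber (G : Multigraph V E) (o : E → Bool) (g : V → ℝ) :
    ∑ e, g (G.head o e) = ∑ v, (G.inDeg o v : ℝ) * g v := by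
  rw [← Finset.sum_fiberwise_of_maps_to (fun e _ => Finset.mem_univ (G.head o e))
      (fun e => g (G.head o e))]
  refine Finset.sum_congr rfl fun v _ => ?_
  rw [Finset.sum_congr rfl (fun e he => ?_), Finset.sum_const, nsmul_eq_mul]
  · rfl
  · simp only [Finset.mem_filter] at he; rw [he.2]

lemma deg_head_pos (G : Multigraph V E) (o : E → Bool) (e : E) :
    0 < G.deg (G.head o e) := by
  apply Finset.card_pos.2
  exact ⟨e, by simpa using head_mem_ends G o e⟩

lemma deg_head_le_max (G : Multigraph V E) (o : E → Bool) (e : E) :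
    G.deg (G.head o e) ≤ max (G.deg (G.ends e).1) (G.deg (G.ends e).2) := by
  rcases head_mem_ends G o e with h | h
  · rw [← h]; exact le_max_left _ _
  · rw [← h]; exact le_max_right _ _

lemma biased_head_deg (G : Multigraph V E) (o : E → Bool) (hb : G.Biased o) (e : E) :
    G.deg (G.head o e) = max (G.deg (G.ends e).1) (G.deg (G.ends e).2) := by
  have h := hb e
  unfold Multigraph.head Multigraph.tail at *
  cases h' : o e <;> rw [h'] at h <;> simp only [if_true, if_false, Bool.false_eq_true] at h ⊢ <;> omega

lemma sum_split (G : Multigraph V E) (o : E → Bool) (hm : 1 ≤ Fintype.card E) :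
    ∑ v, -((G.inDeg o v : ℝ) / (Fintype.card E : ℝ)) *
        Real.logb 2 ((G.deg v : ℝ) / (Fintype.card E : ℝ))
      = Real.logb 2 (Fintype.card E) - (1 / (Fintype.card E : ℝ)) *
          ∑ v, (G.inDeg o v : ℝ) * Real.logb 2 (G.deg v) := by
  set mR : ℝ := (Fintype.card E : ℝ) with hmRdef
  have hmR : (0:ℝ) < mR := by
    simpa [hmRdef] using (Nat.cast_pos.2 (lt_of_lt_of_le one_pos hm) : (0:ℝ) < (Fintype.card E : ℝ))
  have hsplit : ∀ v, -((G.inDeg o v : ℝ) / mR) * Real.logb 2 ((G.deg v : ℝ) / mR)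
      = (G.inDeg o v : ℝ) / mR * Real.logb 2 mR
        - 1 / mR * ((G.inDeg o v : ℝ) * Real.logb 2 (G.deg v)) := by
    intro v
    rcases Nat.eq_zero_or_pos (G.inDeg o v) with h | h
    · simp [h]
    · have hdeg : (0:ℝ) < (G.deg v : ℝ) :=
        Nat.cast_pos.2 (lt_of_lt_of_le h (inDeg_le_deg G o v))
      rw [Real.logb_div (ne_of_gt hdeg) (ne_of_gt hmR)]
      ring
  rw [Finset.sum_congr rfl (fun v _ => hsplit v), Finset.sum_sub_distrib,
    ← Finset.sum_mul, ← Finset.sum_div, ← Finset.mul_sum]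
  have hsum : ∑ v, (G.inDeg o v : ℝ) = mR := by
    rw [hmRdef, ← Nat.cast_sum]
    exact_mod_cast congrArg (Nat.cast : ℕ → ℝ) (sum_inDeg G o)
  rw [hsum, div_self (ne_of_gt hmR), one_mul]

lemma key_bound (G : Multigraph V E) (hm : 1 ≤ Fintype.card E) (o : E → Bool) :
    Real.logb 2 (Fintype.card E) - (1 / (Fintype.card E : ℝ)) *
        ∑ e, Real.logb 2 ((max (G.deg (G.ends e).1) (G.deg (G.ends e).2) : ℕ) : ℝ)
      ≤ G.entropy o := by
  set mR : ℝ := (Fintype.card E : ℝ) with hmRdef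
  have hmR : (0:ℝ) < mR := by
    simpa [hmRdef] using (Nat.cast_pos.2 (lt_of_lt_of_le one_pos hm) : (0:ℝ) < (Fintype.card E : ℝ))
  have stepA : ∑ v, -((G.inDeg o v : ℝ) / mR) * Real.logb 2 ((G.deg v : ℝ) / mR)
      ≤ G.entropy o := by
    unfold Multigraph.entropy
    apply Finset.sum_le_sum
    intro v _
    rcases Nat.eq_zero_or_pos (G.inDeg o v) with h | h
    · simp [h]
    · have hp : (0:ℝ) < (G.inDeg o v : ℝ) / mR :=
        div_pos (Nat.cast_pos.2 h) hmR
      have hq : (G.inDeg o v : ℝ) / mR ≤ (G.deg v : ℝ) / mR := by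
        gcongr
        exact Nat.cast_le.2 (inDeg_le_deg G o v)
      have hq' : (0:ℝ) < (G.deg v : ℝ) / mR := lt_of_lt_of_le hp hq
      have hlog : Real.logb 2 ((G.inDeg o v : ℝ) / mR)
          ≤ Real.logb 2 ((G.deg v : ℝ) / mR) :=
        (Real.logb_le_logb one_lt_two hp hq').2 hq
      have := mul_le_mul_of_nonneg_left hlog hp.le
      simp only [neg_mul]
      linarith
  have stepE : ∑ e, Real.logb 2 ((G.deg (G.head o e) : ℝ))
      ≤ ∑ e, Real.logb 2 ((max (G.deg (G.ends e).1) (G.deg (G.ends e).2) : ℕ) : ℝ) := by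
    apply Finset.sum_le_sum
    intro e _
    have h1 : (0:ℝ) < (G.deg (G.head o e) : ℝ) := Nat.cast_pos.2 (deg_head_pos G o e)
    have h2 : (G.deg (G.head o e) : ℝ)
        ≤ ((max (G.deg (G.ends e).1) (G.deg (G.ends e).2) : ℕ) : ℝ) :=
      Nat.cast_le.2 (deg_head_le_max G o e)
    exact (Real.logb_le_logb one_lt_two h1 (lt_of_lt_of_le h1 h2)).2 h2
  have hfib := sum_fiber G o (fun v => Real.logb 2 (G.deg v))
  calc Real.logb 2 mR - 1 / mR *
        ∑ e, Real.logb 2 ((max (G.deg (G.ends e).1) (G.deg (G.ends e).2) : ℕ) : ℝ)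
      ≤ Real.logb 2 mR - 1 / mR * ∑ e, Real.logb 2 ((G.deg (G.head o e) : ℝ)) := by
        have := mul_le_mul_of_nonneg_left stepE (le_of_lt (by positivity : (0:ℝ) < 1 / mR))
        linarith
    _ = ∑ v, -((G.inDeg o v : ℝ) / mR) * Real.logb 2 ((G.deg v : ℝ) / mR) := by
        rw [sum_split G o hm, hfib]
    _ ≤ G.entropy o := stepA

end Aux

/-- `OPT(G) ≥ ∑_v -p♭_v log₂ (deg v / m)` for any biased orientation with in-degree
distribution `p♭`; equivalently `OPT(G) ≥ log₂ m − (1/m) ∑_{e=uv} log₂ max(deg u, deg v)`. -/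
theorem stmt_14 {V E : Type} [Fintype V] [DecidableEq V] [Fintype E]
    (G : Multigraph V E) (hm : 1 ≤ Fintype.card E) :
    (∀ o : E → Bool, G.Biased o →
      (∑ v, -((G.inDeg o v : ℝ) / (Fintype.card E : ℝ)) *
          Real.logb 2 ((G.deg v : ℝ) / (Fintype.card E : ℝ))) ≤ G.OPT) ∧
    Real.logb 2 (Fintype.card E) - (1 / (Fintype.card E : ℝ)) *
        ∑ e, Real.logb 2 ((max (G.deg (G.ends e).1) (G.deg (G.ends e).2) : ℕ) : ℝ)
      ≤ G.OPT := by
  have hkey : ∀ o : E → Bool,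
      Real.logb 2 (Fintype.card E) - (1 / (Fintype.card E : ℝ)) *
          ∑ e, Real.logb 2 ((max (G.deg (G.ends e).1) (G.deg (G.ends e).2) : ℕ) : ℝ)
        ≤ G.entropy o := key_bound G hm
  have hopt : Real.logb 2 (Fintype.card E) - (1 / (Fintype.card E : ℝ)) *
          ∑ e, Real.logb 2 ((max (G.deg (G.ends e).1) (G.deg (G.ends e).2) : ℕ) : ℝ)
        ≤ G.OPT := le_ciInf hkey
  refine ⟨fun o hb => ?_, hopt⟩
  have hfib := sum_fiber G o (fun v => Real.logb 2 (G.deg v))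
  have heq : ∀ e, Real.logb 2 ((G.deg (G.head o e) : ℝ))
      = Real.logb 2 ((max (G.deg (G.ends e).1) (G.deg (G.ends e).2) : ℕ) : ℝ) := by
    intro e; rw [biased_head_deg G o hb e]
  rw [sum_split G o hm, ← hfib, Finset.sum_congr rfl (fun e _ => heq e)]
  exact hopt
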